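/- Fix integers k ≥ 2, d ≥ 1, 1 ≤ m ≤ d (with k ≥ 3 when d = 1), a real number 0 < ε < 1/8, set N = ⌈1/(8ε)⌉, fix 0 < δ ≤ 1/24, and let A ⊆ {0,...,N-1}^d contain no arithmetic patch of size k with orientation {e_1,...,e_m}. Let F be the attractor of the IFS {φ_a(x) = (δ/(N-1+δ))x + a : a ∈ A}. Then F does not contain any (k, ε, {e_1,...,e_m})-AP. -/

import Mathlib

/-
A point of the attractor has expansions `Σ_{j<n} c^j a_j + c^n z` with digits `a_j ∈ A`,
`c = δ/(N-1+δ)` and `z` in the attractor, which lies in `[0, N-1+δ]^d`. The tail of such an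
expansion after level `j` is at most `δ c^j`, so two digit sums differ by `c^j` times their
first digit gap, up to `δ c^j`. Suppose `F` contains an approximate patch of scale `Δ`. Points
of `F` near two neighbouring patch points then have digit sums differing by about `Δ` in the
direction of the step and by about `0` in the other coordinates. Since `δ ≤ 1/24` and
`ε (N-1) < 1/8`, this pins down one level `j` with `c^j ≈ Δ` and one digit gap `g` for all
neighbouring pairs, and the level-`j` digits form an exact patch of scale `g` inside `A`.
-/

open scoped Classical
open Filter

noncomputable section

/-- The grid `{1,...,N}^d`. -/
def apGrid (d N : ℕ) : Finset (Fin d → ℕ) := Fintype.piFinset fun _ => Finset.Icc 1 N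

/-- `A ⊆ ℕ^d` contains an arithmetic patch of size `k` with orientation `{e_1,...,e_m}`:
there are `t` and a scale `Δ > 0` such that all points `t + Δ·Σ x_i e_i`, `x_i ∈ {0,...,k-1}`,
lie in `A`. -/
def HasPatchNat (d m k : ℕ) (A : Set (Fin d → ℕ)) : Prop :=
  ∃ t : Fin d → ℕ, ∃ Δ : ℕ, 0 < Δ ∧
    ∀ x : Fin m → Fin k,
      (fun i : Fin d => t i + Δ * (if h : (i : ℕ) < m then (x ⟨i, h⟩ : ℕ) else 0)) ∈ A

/-- `rPatch k d m N` = largest cardinality of a subset of `{1,...,N}^d` containing no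
arithmetic patch of size `k` with orientation `{e_1,...,e_m}`. -/
def rPatch (k d m N : ℕ) : ℕ :=
  ((apGrid d N).powerset.filter
    (fun A : Finset (Fin d → ℕ) => ¬ HasPatchNat d m k (↑A : Set (Fin d → ℕ)))).sup Finset.card

/-- The `i`-th standard basis vector of `ℝ^d` (as `EuclideanSpace`), indexed by `i : ℕ`. -/
def stdVec (d : ℕ) (i : ℕ) : EuclideanSpace ℝ (Fin d) :=
  (EuclideanSpace.equiv (Fin d) ℝ).symm fun j : Fin d => if (j : ℕ) = i then (1 : ℝ) else 0

/-- `Q ⊆ ℝ^d` contains a `(k, ε, v)`-AP: there is an arithmetic patch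
`P = {t + Δ·Σ x_i v_i : x_i ∈ {0,...,k-1}}` of scale `Δ > 0` such that every point of `P`
is within distance `ε·Δ` of `Q` (i.e. `inf_{y ∈ Q} ‖x - y‖ ≤ ε Δ` for all `x ∈ P`). -/
def ContainsAP (d m k : ℕ) (ε : ℝ) (v : Fin m → EuclideanSpace ℝ (Fin d))
    (Q : Set (EuclideanSpace ℝ (Fin d))) : Prop :=
  ∃ t : EuclideanSpace ℝ (Fin d), ∃ Δ : ℝ, 0 < Δ ∧
    ∀ x : Fin m → Fin k,
      Metric.infDist (t + Δ • ∑ i, ((x i : ℕ) : ℝ) • v i) Q ≤ ε * Δ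

/-- Smallest cardinality of a family of sets of diameter at most `r` covering `E`. -/
def coverNum {X : Type*} [MetricSpace X] (E : Set X) (r : ℝ) : ℕ :=
  sInf {n : ℕ | ∃ U : Finset (Set X), U.card = n ∧
    (∀ s ∈ U, Metric.diam s ≤ r) ∧ E ⊆ ⋃₀ (↑U : Set (Set X))}

/-- The Assouad dimension of a set in a metric space. -/
def assouadDim {X : Type*} [MetricSpace X] (F : Set X) : ℝ :=
  sInf {σ : ℝ | 0 ≤ σ ∧ ∃ C : ℝ, 0 < C ∧
    ∀ x ∈ F, ∀ r : ℝ, 0 < r → ∀ R : ℝ, r < R →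
      (coverNum (Metric.closedBall x R ∩ F) r : ℝ) ≤ C * (R / r) ^ σ}

open Finset

lemma one_le_abs_natCast_sub_natCast {a b : ℕ} (h : a ≠ b) : 1 ≤ |(a : ℝ) - b| := by
  have : (1 : ℤ) ≤ |(a : ℤ) - b| := Int.one_le_abs (sub_ne_zero.2 (by exact_mod_cast h))
  exact_mod_cast this

def digitSum (c : ℝ) (n : ℕ) (u : ℕ → ℕ) : ℝ := ∑ j ∈ range n, c ^ j * u j

lemma digitSum_succ (c : ℝ) (n : ℕ) (u : ℕ → ℕ) :
    digitSum c (n + 1) u = u 0 + c * digitSum c n (fun j => u (j + 1)) := by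
  simp only [digitSum, sum_range_succ', mul_sum, pow_succ]
  ring_nf

section DigitSum

variable {c B δ Δ E : ℝ} {n : ℕ} {u v : ℕ → ℕ}

lemma abs_digitSum_sub_sub_le (hB : 0 ≤ B) (hc0 : 0 ≤ c) (hc1 : c < 1)
    (hcδ : c * (B + δ) ≤ δ) (hu : ∀ j < n, (u j : ℝ) ≤ B) (hv : ∀ j < n, (v j : ℝ) ≤ B)
    {j₀ : ℕ} (hj₀ : j₀ < n) (hagree : ∀ j < j₀, u j = v j) :
    |digitSum c n v - digitSum c n u - c ^ j₀ * ((v j₀ : ℝ) - u j₀)| ≤ δ * c ^ j₀ := by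
  have hsplit : digitSum c n v - digitSum c n u - c ^ j₀ * ((v j₀ : ℝ) - u j₀)
      = ∑ j ∈ Ico (j₀ + 1) n, c ^ j * ((v j : ℝ) - u j) := by
    have hlow : ∑ j ∈ range j₀, c ^ j * ((v j : ℝ) - u j) = 0 :=
      sum_eq_zero fun j hj => by rw [hagree j (mem_range.1 hj), sub_self, mul_zero]
    rw [digitSum, digitSum, ← sum_sub_distrib]
    simp only [← mul_sub]
    rw [← sum_range_add_sum_Ico _ hj₀.le, sum_eq_sum_Ico_succ_bot hj₀, hlow]
    ring
  have hterm : ∀ j ∈ Ico (j₀ + 1) n, |c ^ j * ((v j : ℝ) - u j)| ≤ B * c ^ j := fun j hj => by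
    have hjn := (mem_Ico.1 hj).2
    rw [abs_mul, abs_of_nonneg (pow_nonneg hc0 j), mul_comm]
    exact mul_le_mul_of_nonneg_right (abs_sub_le_of_nonneg_of_le (Nat.cast_nonneg _) (hv j hjn)
      (Nat.cast_nonneg _) (hu j hjn)) (pow_nonneg hc0 j)
  calc |digitSum c n v - digitSum c n u - c ^ j₀ * ((v j₀ : ℝ) - u j₀)|
      ≤ ∑ j ∈ Ico (j₀ + 1) n, B * c ^ j := hsplit ▸ (abs_sum_le_sum_abs _ _).trans (sum_le_sum hterm)
    _ ≤ B * (c ^ (j₀ + 1) / (1 - c)) := by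
      rw [← mul_sum]; exact mul_le_mul_of_nonneg_left (geom_sum_Ico_le_of_lt_one hc0 hc1) hB
    _ ≤ δ * c ^ j₀ := by
      rw [mul_div_assoc', div_le_iff₀ (sub_pos.2 hc1), pow_succ]
      nlinarith [pow_nonneg hc0 j₀]

lemma exists_first_digit_ne (hB : 0 ≤ B) (hc0 : 0 ≤ c) (hc1 : c < 1)
    (hcδ : c * (B + δ) ≤ δ) (hu : ∀ j < n, (u j : ℝ) ≤ B) (hv : ∀ j < n, (v j : ℝ) ≤ B)
    {j : ℕ} (hj : j < n) (hne : u j ≠ v j) :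
    ∃ j₀ ≤ j, u j₀ ≠ v j₀ ∧
      |digitSum c n v - digitSum c n u - c ^ j₀ * ((v j₀ : ℝ) - u j₀)| ≤ δ * c ^ j₀ := by
  have hex : ∃ j, u j ≠ v j := ⟨j, hne⟩
  have hle : Nat.find hex ≤ j := Nat.find_min' hex hne
  refine ⟨Nat.find hex, hle, Nat.find_spec hex, abs_digitSum_sub_sub_le hB hc0 hc1 hcδ hu hv
    (hle.trans_lt hj) fun j' hj' => not_not.1 (Nat.find_min hex hj')⟩

lemma digit_eq_of_abs_digitSum_sub_le (hB : 0 ≤ B) (hc0 : 0 ≤ c) (hc1 : c < 1)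
    (hcδ : c * (B + δ) ≤ δ) (hu : ∀ j < n, (u j : ℝ) ≤ B) (hv : ∀ j < n, (v j : ℝ) ≤ B)
    (h : |digitSum c n v - digitSum c n u| ≤ E) {j : ℕ} (hj : j < n)
    (hjE : E < (1 - δ) * c ^ j) : u j = v j := by
  by_contra hne
  obtain ⟨j₀, hj₀j, hne₀, hest⟩ := exists_first_digit_ne hB hc0 hc1 hcδ hu hv hj hne
  have hgap := one_le_abs_natCast_sub_natCast (Ne.symm hne₀)
  have hpow : c ^ j ≤ c ^ j₀ := pow_le_pow_of_le_one hc0 hc1.le hj₀j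
  have hc₀ : 0 ≤ c ^ j₀ := pow_nonneg hc0 j₀
  have : c ^ j₀ * |(v j₀ : ℝ) - u j₀| ≤ E + δ * c ^ j₀ := by
    rw [← abs_of_nonneg hc₀, ← abs_mul, abs_of_nonneg hc₀]
    have htri := abs_sub_abs_le_abs_sub (c ^ j₀ * ((v j₀ : ℝ) - u j₀))
      (digitSum c n v - digitSum c n u)
    rw [abs_sub_comm (c ^ j₀ * _)] at htri
    linarith
  have hlow : (1 - δ) * c ^ j₀ ≤ E := by nlinarith [mul_le_mul_of_nonneg_left hgap hc₀]
  rcases le_total δ 1 with hδ | hδ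
  · nlinarith [mul_le_mul_of_nonneg_left hpow (sub_nonneg.2 hδ)]
  · nlinarith [abs_nonneg (digitSum c n v - digitSum c n u), pow_nonneg hc0 j]

lemma exists_digit_gap (hB : 0 ≤ B) (hc0 : 0 ≤ c) (hc1 : c < 1)
    (hcδ : c * (B + δ) ≤ δ) (hu : ∀ j < n, (u j : ℝ) ≤ B) (hv : ∀ j < n, (v j : ℝ) ≤ B)
    (hδ : δ < 1) (hEΔ : E < Δ) (h : |digitSum c n v - digitSum c n u - Δ| ≤ E) :
    ∃ j < n, ∃ G : ℕ, 1 ≤ G ∧ v j = u j + G ∧ (G : ℝ) ≤ B ∧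
      |c ^ j * G - Δ| ≤ E + δ * c ^ j := by
  obtain ⟨j, hj, hne⟩ : ∃ j < n, u j ≠ v j := by
    by_contra! hall
    have : digitSum c n v = digitSum c n u :=
      sum_congr rfl fun j hj => by rw [hall j (mem_range.1 hj)]
    rw [this, sub_self, zero_sub, abs_neg] at h
    linarith [le_abs_self Δ]
  obtain ⟨j₀, hj₀j, hne₀, hest⟩ := exists_first_digit_ne hB hc0 hc1 hcδ hu hv hj hne
  have hj₀ : j₀ < n := hj₀j.trans_lt hj
  rw [abs_le] at h hest
  have hc₀ : 0 ≤ c ^ j₀ := pow_nonneg hc0 j₀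
  -- a negative first difference would make the digit sums decrease, not increase by `≈ Δ`
  have hlt : u j₀ < v j₀ := by
    by_contra! hle
    have : (v j₀ : ℝ) + 1 ≤ u j₀ := by exact_mod_cast (hle.lt_of_ne (Ne.symm hne₀))
    nlinarith
  refine ⟨j₀, hj₀, v j₀ - u j₀, by omega, by omega, ?_, ?_⟩
  · rw [Nat.cast_sub hlt.le]; linarith [hv j₀ hj₀, (Nat.cast_nonneg (u j₀) : (0 : ℝ) ≤ _)]
  · rw [Nat.cast_sub hlt.le, abs_le]; constructor <;> linarith

lemma two_mul_lt_of_abs_pow_mul_sub_le (hc0 : 0 ≤ c) (hδ0 : 0 ≤ δ) (hδ : 2 * δ ≤ 1)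
    {j G : ℕ} (hG : 1 ≤ G) (hGB : (G : ℝ) ≤ B) (h : |c ^ j * G - Δ| ≤ E + δ * c ^ j)
    (hE : 2 * E * (B + δ) < (1 - 2 * δ) * (Δ - E)) : 2 * E < (1 - 2 * δ) * c ^ j := by
  have hBδ : 0 < B + δ := by linarith [(by exact_mod_cast hG : (1 : ℝ) ≤ G)]
  have hΔ : Δ - E ≤ c ^ j * (B + δ) := by
    nlinarith [(abs_le.1 h).1, mul_le_mul_of_nonneg_left hGB (pow_nonneg hc0 j)]
  have := mul_le_mul_of_nonneg_left hΔ (by linarith : (0 : ℝ) ≤ 1 - 2 * δ)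
  by_contra! hcon
  nlinarith [mul_le_mul_of_nonneg_right hcon hBδ.le]

lemma not_lt_of_abs_pow_mul_sub_le (hc0 : 0 ≤ c) (hc1 : c ≤ 1) (hcδ : c * (B + δ) ≤ δ)
    (hδ0 : 0 ≤ δ) (hδ : 2 * δ ≤ 1) (hE0 : 0 ≤ E)
    (hE : 2 * E * (B + δ) < (1 - 2 * δ) * (Δ - E)) {j j' G G' : ℕ}
    (hG : 1 ≤ G) (hG' : 1 ≤ G') (hGB' : (G' : ℝ) ≤ B)
    (h : |c ^ j * G - Δ| ≤ E + δ * c ^ j) (h' : |c ^ j' * G' - Δ| ≤ E + δ * c ^ j') :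
    ¬ j < j' := by
  intro hjj'
  have hG1 : (1 : ℝ) ≤ G := by exact_mod_cast hG
  have hG1' : (1 : ℝ) ≤ G' := by exact_mod_cast hG'
  have hpow : c ^ j' ≤ c * c ^ j := by
    rw [← pow_succ']; exact pow_le_pow_of_le_one hc0 hc1 hjj'
  have hup : Δ - E ≤ δ * c ^ j := by
    have : Δ - E ≤ c ^ j' * (B + δ) := by
      nlinarith [(abs_le.1 h').1, mul_le_mul_of_nonneg_left hGB' (pow_nonneg hc0 j')]
    nlinarith [mul_le_mul_of_nonneg_right hpow (by linarith : (0 : ℝ) ≤ B + δ),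
      pow_nonneg hc0 j]
  have hlow : (1 - δ) * c ^ j ≤ Δ + E := by
    nlinarith [(abs_le.1 h).2, mul_le_mul_of_nonneg_left hG1 (pow_nonneg hc0 j)]
  nlinarith [mul_le_mul_of_nonneg_left hup (by linarith : (0 : ℝ) ≤ 1 - δ)]

lemma eq_and_eq_of_abs_pow_mul_sub_le (hc0 : 0 ≤ c) (hc1 : c ≤ 1) (hcδ : c * (B + δ) ≤ δ)
    (hδ0 : 0 ≤ δ) (hδ : 2 * δ ≤ 1) (hE0 : 0 ≤ E)
    (hE : 2 * E * (B + δ) < (1 - 2 * δ) * (Δ - E)) {j j' G G' : ℕ}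
    (hG : 1 ≤ G) (hGB : (G : ℝ) ≤ B) (hG' : 1 ≤ G') (hGB' : (G' : ℝ) ≤ B)
    (h : |c ^ j * G - Δ| ≤ E + δ * c ^ j) (h' : |c ^ j' * G' - Δ| ≤ E + δ * c ^ j') :
    j = j' ∧ G = G' := by
  obtain rfl : j = j' := by
    rcases lt_trichotomy j j' with hlt | heq | hgt
    · exact absurd hlt (not_lt_of_abs_pow_mul_sub_le hc0 hc1 hcδ hδ0 hδ hE0 hE hG hG' hGB' h h')
    · exact heq
    · exact absurd hgt (not_lt_of_abs_pow_mul_sub_le hc0 hc1 hcδ hδ0 hδ hE0 hE hG' hG hGB h' h)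
  refine ⟨rfl, ?_⟩
  by_contra hne
  have hgap := one_le_abs_natCast_sub_natCast hne
  have hsmall := two_mul_lt_of_abs_pow_mul_sub_le hc0 hδ0 hδ hG hGB h hE
  have : c ^ j * |(G : ℝ) - G'| ≤ 2 * E + 2 * δ * c ^ j := by
    rw [← abs_of_nonneg (pow_nonneg hc0 j), ← abs_mul, abs_of_nonneg (pow_nonneg hc0 j), mul_sub]
    calc |c ^ j * G - c ^ j * G'| ≤ |c ^ j * G - Δ| + |c ^ j * G' - Δ| := by
          rw [abs_sub_comm (c ^ j * G') Δ]; exact abs_sub_le _ _ _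
      _ ≤ 2 * E + 2 * δ * c ^ j := by linarith
  nlinarith [mul_le_mul_of_nonneg_left hgap (pow_nonneg hc0 j)]

end DigitSum

lemma HasPatchNat.mono {d m k : ℕ} {P Q : Set (Fin d → ℕ)} (h : HasPatchNat d m k P)
    (hPQ : P ⊆ Q) : HasPatchNat d m k Q :=
  let ⟨t, Δ, hΔ, hP⟩ := h
  ⟨t, Δ, hΔ, fun x => hPQ (hP x)⟩

def GridStep {m k : ℕ} (x x' : Fin m → Fin k) (i : Fin m) : Prop :=
  (x' i : ℕ) = x i + 1 ∧ ∀ l ≠ i, x' l = x l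

lemma GridStep.sum_nsmul {m k : ℕ} {M : Type*} [AddCommMonoid M] {x x' : Fin m → Fin k}
    {i : Fin m} (h : GridStep x x' i) (v : Fin m → M) :
    ∑ l, (x' l : ℕ) • v l = ∑ l, (x l : ℕ) • v l + v i := by
  have herase : ∑ l ∈ univ.erase i, (x' l : ℕ) • v l = ∑ l ∈ univ.erase i, (x l : ℕ) • v l :=
    sum_congr rfl fun l hl => by rw [h.2 l (ne_of_mem_erase hl)]
  rw [← add_sum_erase _ _ (mem_univ i), herase, h.1, succ_nsmul,
    ← add_sum_erase _ _ (mem_univ i)]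
  abel

lemma eq_add_sum_nsmul_of_gridStep {m k : ℕ} {M : Type*} [AddCommMonoid M]
    (f : (Fin m → Fin k) → M) (e : Fin m → M)
    (hf : ∀ x x' i, GridStep x x' i → f x' = f x + e i)
    {x₀ : Fin m → Fin k} (hx₀ : ∀ i, (x₀ i : ℕ) = 0) (x : Fin m → Fin k) :
    f x = f x₀ + ∑ i, (x i : ℕ) • e i := by
  induction hs : ∑ i, (x i : ℕ) generalizing x with
  | zero =>
    obtain rfl : x = x₀ :=
      funext fun i => Fin.ext ((sum_eq_zero_iff.1 hs i (mem_univ i)).trans (hx₀ i).symm)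
    simp [hx₀]
  | succ s ih =>
    obtain ⟨i, hi⟩ : ∃ i, (x i : ℕ) ≠ 0 := by
      by_contra! h
      simp [h] at hs
    set xm := Function.update x i ⟨x i - 1, by omega⟩
    have hstep : GridStep xm x i := ⟨by simp [xm]; omega, fun l hl => by simp [xm, hl]⟩
    have hsum : ∑ l, (xm l : ℕ) = s := by
      have := hstep.sum_nsmul (fun _ => 1)
      simp only [smul_eq_mul, mul_one] at this
      omega
    rw [hf xm x i hstep, ih xm hsum, add_assoc, ← hstep.sum_nsmul]

lemma sum_nsmul_ite_val_eq {m : ℕ} (x : Fin m → ℕ) (g i : ℕ) :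
    ∑ l : Fin m, x l • (if i = (l : ℕ) then g else 0) = g * if h : i < m then x ⟨i, h⟩ else 0 := by
  split_ifs with h
  · rw [sum_eq_single ⟨i, h⟩ (fun l _ hl => by rw [if_neg fun hi => hl (Fin.ext hi.symm), smul_zero])
      (by simp), if_pos rfl, smul_eq_mul, mul_comm]
  · rw [mul_zero]
    exact sum_eq_zero fun l _ => by rw [if_neg fun hi : i = l => h (hi ▸ l.isLt), smul_zero]

section Patch

variable {m k d n : ℕ} {c B δ Δ E : ℝ}

lemma digits_eq_add_of_gridStep (hB : 0 ≤ B) (hc0 : 0 ≤ c) (hc1 : c < 1)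
    (hcδ : c * (B + δ) ≤ δ) (hδ0 : 0 ≤ δ) (hδ : 2 * δ ≤ 1) (hE0 : 0 ≤ E)
    (hE : 2 * E * (B + δ) < (1 - 2 * δ) * (Δ - E)) (a : (Fin m → Fin k) → ℕ → Fin d → ℕ)
    (hdig : ∀ x, ∀ j < n, ∀ i, (a x j i : ℝ) ≤ B)
    (happrox : ∀ x x' i₀, GridStep x x' i₀ → ∀ i : Fin d,
      |digitSum c n (fun j => a x' j i) - digitSum c n (fun j => a x j i) -
        if (i : ℕ) = i₀ then Δ else 0| ≤ E)
    {j g : ℕ} (hj : j < n) (hg : 1 ≤ g) (hgB : (g : ℝ) ≤ B)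
    (hgΔ : |c ^ j * g - Δ| ≤ E + δ * c ^ j) {x x' : Fin m → Fin k} {i₀ : Fin m}
    (hxx' : GridStep x x' i₀) :
    a x' j = a x j + fun i : Fin d => if (i : ℕ) = i₀ then g else 0 := by
  funext i
  have hu : ∀ j < n, (a x j i : ℝ) ≤ B := fun j hj => hdig x j hj i
  have hv : ∀ j < n, (a x' j i : ℝ) ≤ B := fun j hj => hdig x' j hj i
  by_cases hi : (i : ℕ) = i₀
  · have hEΔ : E < Δ := by nlinarith
    obtain ⟨j', -, G, hG, hGv, hGB, hGΔ⟩ := exists_digit_gap hB hc0 hc1 hcδ hu hv (by linarith)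
      hEΔ (by simpa [hi] using happrox x x' i₀ hxx' i)
    obtain ⟨rfl, rfl⟩ :=
      eq_and_eq_of_abs_pow_mul_sub_le hc0 hc1.le hcδ hδ0 hδ hE0 hE hG hGB hg hgB hGΔ hgΔ
    simp [hi, hGv]
  · have hsmall := two_mul_lt_of_abs_pow_mul_sub_le hc0 hδ0 hδ hg hgB hgΔ hE
    have := digit_eq_of_abs_digitSum_sub_le hB hc0 hc1 hcδ hu hv
      (by simpa [hi] using happrox x x' i₀ hxx' i) hj (by nlinarith [pow_nonneg hc0 j])
    simp [hi, this]

/- `hE` makes the window `(Δ - E) / (B + δ) ≤ c^j ≤ (Δ + E) / (1 - δ)` of possible levels contain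
a single power of `c`, and lets the digit gap at that level be read off from `Δ`. -/
theorem exists_hasPatchNat_range_digits (hmd : m ≤ d) (hm : 1 ≤ m) (hk : 2 ≤ k)
    (hB : 0 ≤ B) (hc0 : 0 ≤ c) (hc1 : c < 1)
    (hcδ : c * (B + δ) ≤ δ) (hδ0 : 0 ≤ δ) (hδ : 2 * δ ≤ 1) (hE0 : 0 ≤ E)
    (hE : 2 * E * (B + δ) < (1 - 2 * δ) * (Δ - E)) (a : (Fin m → Fin k) → ℕ → Fin d → ℕ)
    (hdig : ∀ x, ∀ j < n, ∀ i, (a x j i : ℝ) ≤ B)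
    (happrox : ∀ x x' i₀, GridStep x x' i₀ → ∀ i : Fin d,
      |digitSum c n (fun j => a x' j i) - digitSum c n (fun j => a x j i) -
        if (i : ℕ) = i₀ then Δ else 0| ≤ E) :
    ∃ j < n, HasPatchNat d m k (Set.range fun x => a x j) := by
  set i₀ : Fin m := ⟨0, hm⟩
  set x₀ : Fin m → Fin k := fun _ => ⟨0, by omega⟩
  have hstep₀ : GridStep x₀ (Function.update x₀ i₀ ⟨1, hk⟩) i₀ :=
    ⟨by simp [x₀], fun l hl => by simp [hl]⟩
  have hEΔ : E < Δ := by nlinarith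
  -- the unit step in the first direction fixes the level `j` and the digit gap `g`
  obtain ⟨j, hj, g, hg, -, hgB, hgΔ⟩ := exists_digit_gap hB hc0 hc1 hcδ
    (fun j hj => hdig _ j hj _) (fun j hj => hdig _ j hj _) (by linarith) hEΔ
    (by simpa [i₀] using happrox _ _ _ hstep₀ (Fin.castLE hmd i₀))
  have hgrid := eq_add_sum_nsmul_of_gridStep (fun x => a x j) _
    (fun x x' i₀ h => digits_eq_add_of_gridStep hB hc0 hc1 hcδ hδ0 hδ hE0 hE a hdig happrox
      hj hg hgB hgΔ h) (x₀ := x₀) fun _ => rfl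
  refine ⟨j, hj, a x₀ j, g, hg, fun x => ⟨x, funext fun i => ?_⟩⟩
  change a x j i = _
  rw [hgrid x, Pi.add_apply, Finset.sum_apply]
  exact congrArg _ (sum_nsmul_ite_val_eq (fun l => (x l : ℕ)) g i)

end Patch

section Attractor

variable {d : ℕ} {c : ℝ} {A : Finset (Fin d → ℕ)} {F : Set (EuclideanSpace ℝ (Fin d))}

lemma coord_eq_mul_add_of_eq_iUnion
    {φ : (Fin d → ℕ) → EuclideanSpace ℝ (Fin d) → EuclideanSpace ℝ (Fin d)}
    (hφ : ∀ a x, φ a x = c • x + (EuclideanSpace.equiv (Fin d) ℝ).symm (fun i => (a i : ℝ)))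
    (hF : F = ⋃ a ∈ A, φ a '' F) : ∀ y ∈ F, ∃ a ∈ A, ∃ w ∈ F, ∀ i, y i = c * w i + a i := by
  intro y hy
  rw [hF] at hy
  simp only [Set.mem_iUnion, Set.mem_image] at hy
  obtain ⟨a, ha, w, hw, rfl⟩ := hy
  exact ⟨a, ha, w, hw, fun i => by rw [hφ]; rfl⟩

lemma exists_digitSum_add (hF : ∀ y ∈ F, ∃ a ∈ A, ∃ w ∈ F, ∀ i, y i = c * w i + a i)
    (n : ℕ) {y : EuclideanSpace ℝ (Fin d)} (hy : y ∈ F) :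
    ∃ a : ℕ → Fin d → ℕ, (∀ j < n, a j ∈ A) ∧
      ∃ z ∈ F, ∀ i, y i = digitSum c n (fun j => a j i) + c ^ n * z i := by
  induction n generalizing y with
  | zero => exact ⟨fun _ => 0, by simp, y, hy, fun i => by simp [digitSum]⟩
  | succ n ih =>
    obtain ⟨a₀, ha₀, w, hw, hyw⟩ := hF y hy
    obtain ⟨a, ha, z, hz, hwz⟩ := ih hw
    refine ⟨fun j => match j with | 0 => a₀ | j + 1 => a j, fun j hj => ?_, z, hz, fun i => ?_⟩
    · cases j with
      | zero => exact ha₀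
      | succ j => exact ha j (by omega)
    · rw [digitSum_succ, hyw i, hwz i, pow_succ']
      ring

lemma coord_mem_Icc_of_subset (hFc : IsCompact F)
    (hF : ∀ y ∈ F, ∃ a ∈ A, ∃ w ∈ F, ∀ i, y i = c * w i + a i) (hc0 : 0 ≤ c) (hc1 : c < 1)
    {B R : ℝ} (hA : ∀ a ∈ A, ∀ i, (a i : ℝ) ≤ B) (hR : c * R + B ≤ R)
    {y : EuclideanSpace ℝ (Fin d)} (hy : y ∈ F) (i : Fin d) : y i ∈ Set.Icc 0 R := by
  have hcont : ContinuousOn (fun y : EuclideanSpace ℝ (Fin d) => y i) F :=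
    (PiLp.continuous_apply 2 _ i).continuousOn
  obtain ⟨ymin, hminF, hmin⟩ := hFc.exists_isMinOn ⟨y, hy⟩ hcont
  obtain ⟨ymax, hmaxF, hmax⟩ := hFc.exists_isMaxOn ⟨y, hy⟩ hcont
  obtain ⟨a, -, w, hw, hyw⟩ := hF ymin hminF
  obtain ⟨a', ha', w', hw', hyw'⟩ := hF ymax hmaxF
  have hmin_nonneg : 0 ≤ ymin i := by
    have : c * ymin i ≤ ymin i := by
      linarith [hyw i, mul_le_mul_of_nonneg_left (isMinOn_iff.1 hmin w hw) hc0,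
        (Nat.cast_nonneg (a i) : (0 : ℝ) ≤ _)]
    nlinarith
  have hmax_le : ymax i ≤ R := by
    have : ymax i ≤ c * ymax i + B := by
      linarith [hyw' i, mul_le_mul_of_nonneg_left (isMaxOn_iff.1 hmax w' hw') hc0, hA a' ha' i]
    nlinarith
  exact ⟨hmin_nonneg.trans (isMinOn_iff.1 hmin y hy), (isMaxOn_iff.1 hmax y hy).trans hmax_le⟩

lemma exists_digits_near (hFc : IsCompact F) (hFne : F.Nonempty)
    (hF : ∀ y ∈ F, ∃ a ∈ A, ∃ w ∈ F, ∀ i, y i = c * w i + a i) {R : ℝ}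
    (hFR : ∀ y ∈ F, ∀ i, y i ∈ Set.Icc 0 R) (hc0 : 0 ≤ c) {ι : Type*}
    (p : ι → EuclideanSpace ℝ (Fin d)) {r : ℝ} (hp : ∀ x, Metric.infDist (p x) F ≤ r) (n : ℕ) :
    ∃ a : ι → ℕ → Fin d → ℕ, (∀ x, ∀ j < n, a x j ∈ A) ∧ ∀ x x' i,
      |digitSum c n (fun j => a x' j i) - digitSum c n (fun j => a x j i) - (p x' i - p x i)|
        ≤ 2 * r + c ^ n * R := by
  have hnear : ∀ x, ∃ y ∈ F, ∀ i, |p x i - y i| ≤ r := fun x => by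
    obtain ⟨y, hy, hdist⟩ := hFc.exists_infDist_eq_dist hFne (p x)
    refine ⟨y, hy, fun i => ?_⟩
    rw [← Real.dist_eq]
    exact (PiLp.dist_apply_le _ _ i).trans (hdist ▸ hp x)
  choose y hyF hy using hnear
  choose a ha z hzF hz using fun x => exists_digitSum_add hF n (hyF x)
  refine ⟨a, ha, fun x x' i => ?_⟩
  have hcn := pow_nonneg hc0 n
  have hzx := hFR _ (hzF x) i
  have hzx' := hFR _ (hzF x') i
  have := hz x i
  have := hz x' i
  have := abs_le.1 (hy x i)
  have := abs_le.1 (hy x' i)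
  rw [abs_le]
  constructor <;> nlinarith [mul_le_mul_of_nonneg_left hzx.2 hcn, mul_nonneg hcn hzx.1,
    mul_le_mul_of_nonneg_left hzx'.2 hcn, mul_nonneg hcn hzx'.1]

end Attractor

lemma apPoint_sub_apply {d m k : ℕ} {x x' : Fin m → Fin k} {i₀ : Fin m} (h : GridStep x x' i₀)
    (t : EuclideanSpace ℝ (Fin d)) (Δ : ℝ) (i : Fin d) :
    (t + Δ • ∑ l, ((x' l : ℕ) : ℝ) • stdVec d l) i - (t + Δ • ∑ l, ((x l : ℕ) : ℝ) • stdVec d l) i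
      = if (i : ℕ) = i₀ then Δ else 0 := by
  simp only [Nat.cast_smul_eq_nsmul, h.sum_nsmul]
  simp [stdVec]

lemma two_le_and_sub_one_mul_lt {ε : ℝ} {N : ℕ} (hε : 0 < ε) (hε' : ε < 1 / 8)
    (hN : N = ⌈1 / (8 * ε)⌉₊) : 2 ≤ (N : ℝ) ∧ ((N : ℝ) - 1) * ε < 1 / 8 := by
  have h1 : 1 < N := by
    rw [hN, Nat.lt_ceil, lt_div_iff₀ (by positivity)]
    push_cast
    linarith
  have h2 : (N : ℝ) < 1 / (8 * ε) + 1 := hN ▸ Nat.ceil_lt_add_one (by positivity)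
  refine ⟨by exact_mod_cast h1, ?_⟩
  calc ((N : ℝ) - 1) * ε < 1 / (8 * ε) * ε := by gcongr; linarith
    _ = 1 / 8 := by field_simp

lemma separation_of_le {ε B δ Δ θ : ℝ} (hε : 0 < ε) (hε' : ε < 1 / 8) (hεB : B * ε < 1 / 8)
    (hδ0 : 0 ≤ δ) (hδ : δ ≤ 1 / 24) (hΔ : 0 < Δ) (hθ : 0 ≤ θ)
    (hθΔ : θ * (12 * (B + δ) + 6) ≤ Δ) :
    2 * (2 * (ε * Δ) + θ) * (B + δ) < (1 - 2 * δ) * (Δ - (2 * (ε * Δ) + θ)) := by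
  nlinarith [mul_pos hε hΔ, mul_nonneg hθ hδ0, mul_le_mul_of_nonneg_left hδ hε.le,
    mul_le_mul_of_nonneg_right hεB.le hΔ.le, mul_nonneg (mul_nonneg hε.le hΔ.le) hδ0]

theorem attractor_no_approx_AP_general (k d m : ℕ) (hk : 2 ≤ k) (hm : 1 ≤ m)
    (hmd : m ≤ d)
    (ε : ℝ) (hε : 0 < ε) (hε' : ε < 1/8) (N : ℕ) (hN : N = ⌈1/(8*ε)⌉₊)
    (δ : ℝ) (hδ : 0 < δ) (hδ' : δ ≤ 1/24)
    (A : Finset (Fin d → ℕ)) (hA : A ⊆ Fintype.piFinset fun _ : Fin d => Finset.range N)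
    (hfree : ¬ HasPatchNat d m k (↑A : Set (Fin d → ℕ)))
    (φ : (Fin d → ℕ) → EuclideanSpace ℝ (Fin d) → EuclideanSpace ℝ (Fin d))
    (hφ : ∀ a x, φ a x = (δ / ((N : ℝ) - 1 + δ)) • x +
      (EuclideanSpace.equiv (Fin d) ℝ).symm (fun i : Fin d => (a i : ℝ)))
    (F : Set (EuclideanSpace ℝ (Fin d)))
    (hFc : IsCompact F) (hFne : F.Nonempty) (hFinv : F = ⋃ a ∈ A, φ a '' F) :
    ¬ ContainsAP d m k ε (fun i : Fin m => stdVec d i) F := by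
  rintro ⟨t, Δ, hΔ, hap⟩
  obtain ⟨hN2, hNε⟩ := two_le_and_sub_one_mul_lt hε hε' hN
  set B : ℝ := N - 1
  have hBδ : 0 < B + δ := by linarith
  set c : ℝ := δ / (B + δ)
  have hcδ : c * (B + δ) = δ := div_mul_cancel₀ δ hBδ.ne'
  have hc0 : 0 ≤ c := div_nonneg hδ.le hBδ.le
  have hc1 : c < 1 := (div_lt_one hBδ).2 (by linarith)
  have hF := coord_eq_mul_add_of_eq_iUnion hφ hFinv
  have hAB : ∀ a ∈ A, ∀ i, (a i : ℝ) ≤ B := fun a ha i => by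
    have := Finset.mem_range.1 (Fintype.mem_piFinset.1 (hA ha) i)
    simp only [B, le_sub_iff_add_le]
    exact_mod_cast this
  have hFR : ∀ y ∈ F, ∀ i, y i ∈ Set.Icc 0 (B + δ) := fun y hy =>
    coord_mem_Icc_of_subset hFc hF hc0 hc1 hAB (by linarith) hy
  obtain ⟨n, hn⟩ := exists_pow_lt_of_lt_one
    (div_pos hΔ (by positivity : (0 : ℝ) < (B + δ) * (12 * (B + δ) + 6))) hc1
  obtain ⟨a, haA, happrox⟩ := exists_digits_near hFc hFne hF hFR hc0 _ hap n
  obtain ⟨j, hj, hpatch⟩ := exists_hasPatchNat_range_digits (n := n)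
    (E := 2 * (ε * Δ) + c ^ n * (B + δ)) hmd hm hk (by linarith) hc0
    hc1 hcδ.le hδ.le (by linarith) (by positivity)
    (separation_of_le hε hε' (by linarith) hδ.le hδ' hΔ (by positivity)
      (by rw [lt_div_iff₀ (by positivity)] at hn; nlinarith))
    a (fun x j hj i => hAB _ (haA x j hj) i)
    fun x x' i₀ h i => by simpa only [apPoint_sub_apply h t Δ i] using happrox x x' i
  exact hfree (HasPatchNat.mono hpatch (Set.range_subset_iff.2 fun x => haA x j hj))

theorem attractor_no_approx_AP (k d m : ℕ) (hk : 2 ≤ k) (hd : 1 ≤ d) (hm : 1 ≤ m)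
    (hmd : m ≤ d) (hk3 : d = 1 → 3 ≤ k)
    (ε : ℝ) (hε : 0 < ε) (hε' : ε < 1/8) (N : ℕ) (hN : N = ⌈1/(8*ε)⌉₊)
    (δ : ℝ) (hδ : 0 < δ) (hδ' : δ ≤ 1/24)
    (A : Finset (Fin d → ℕ)) (hA : A ⊆ Fintype.piFinset fun _ : Fin d => Finset.range N)
    (hfree : ¬ HasPatchNat d m k (↑A : Set (Fin d → ℕ)))
    (φ : (Fin d → ℕ) → EuclideanSpace ℝ (Fin d) → EuclideanSpace ℝ (Fin d))
    (hφ : ∀ a x, φ a x = (δ / ((N : ℝ) - 1 + δ)) • x +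
      (EuclideanSpace.equiv (Fin d) ℝ).symm (fun i : Fin d => (a i : ℝ)))
    (F : Set (EuclideanSpace ℝ (Fin d)))
    (hFc : IsCompact F) (hFne : F.Nonempty) (hFinv : F = ⋃ a ∈ A, φ a '' F) :
    ¬ ContainsAP d m k ε (fun i : Fin m => stdVec d i) F :=
  attractor_no_approx_AP_general k d m hk hm hmd ε hε hε' N hN δ hδ hδ' A hA hfree φ hφ F hFc hFne
    hFinv
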